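/- arXiv:1903.12318 — 5 statements merged into one kernel-verified Lean document; each statement's English description precedes it below -/
import Mathlib

section
/- (Theorem 2 / optimality condition for K codebooks.) Let p_1,…,p_J ∈ Δ_N, let f_1,…,f_J ≥ 0 with ∑_j f_j = 1, and let K ≥ 1. Suppose (q_1,…,q_K), with each q_k ∈ Δ_N having all entries strictly positive, globally minimizes F(q_1,…,q_K) = ∑_{j=1}^J f_j · min_{k∈{1,…,K}} D(p_j‖q_k) over all K-tuples of strictly positive elements of Δ_N. Let a : {1,…,J} → {1,…,K} be any assignment satisfying D(p_j‖q_{a(j)}) = min_k D(p_j‖q_k) for all j. Then for every k with ∑_{j : a(j)=k} f_j > 0, the codebook q_k equals the conditional centroid of its cluster: q_{k,n} = (∑_{j : a(j)=k} f_j p_{j,n}) / (∑_{j : a(j)=k} f_j) for every n. -/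
open Finset

/-- The standard probability simplex `Δ_N` in `ℝ^N`. -/
def simplex (N : ℕ) : Set (Fin N → ℝ) :=
  {p | (∀ n, 0 ≤ p n) ∧ ∑ n, p n = 1}

/-- Kullback–Leibler divergence `D(p‖q) = ∑_{n : p_n > 0} p_n log(p_n/q_n)`
(natural log, convention `0 · log 0 = 0`, which holds definitionally since
`p n = 0` makes the summand `0`). -/
noncomputable def KL {N : ℕ} (p q : Fin N → ℝ) : ℝ :=
  ∑ n, p n * Real.log (p n / q n)

lemma term_lt {c q : ℝ} (hc : 0 ≤ c) (hq : 0 < q) (hne : c ≠ q) :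
    c * Real.log q < c * Real.log c + (q - c) := by
  rcases hc.eq_or_lt with h | h
  · rw [← h]; simpa using hq
  · have hd : (0:ℝ) < q / c := div_pos hq h
    have hne1 : q / c ≠ 1 := by
      intro habs
      apply hne
      field_simp at habs
      linarith
    have h1 := Real.log_lt_sub_one_of_pos hd hne1
    rw [Real.log_div hq.ne' h.ne'] at h1
    have h2 := mul_lt_mul_of_pos_left h1 h
    rw [mul_sub, mul_sub, mul_div_cancel₀ _ h.ne'] at h2
    linarith

lemma term_le {c q : ℝ} (hc : 0 ≤ c) (hq : 0 < q) :
    c * Real.log q ≤ c * Real.log c + (q - c) := by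
  rcases eq_or_ne c q with h | h
  · subst h; simp
  · exact (term_lt hc hq h).le

lemma gibbs {N : ℕ} (c q : Fin N → ℝ) (hc : ∀ n, 0 ≤ c n) (hcs : ∑ n, c n = 1)
    (hq : ∀ n, 0 < q n) (hqs : ∑ n, q n = 1) (n₀ : Fin N) (hne : c n₀ ≠ q n₀) :
    ∑ n, c n * Real.log (q n) < ∑ n, c n * Real.log (c n) := by
  have h := Finset.sum_lt_sum (f := fun n => c n * Real.log (q n))
    (g := fun n => c n * Real.log (c n) + (q n - c n))
    (fun n _ => term_le (hc n) (hq n))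
    ⟨n₀, Finset.mem_univ _, term_lt (hc n₀) (hq n₀) hne⟩
  rw [Finset.sum_add_distrib, Finset.sum_sub_distrib, hcs, hqs] at h
  linarith

lemma KL_eq {N : ℕ} (p r : Fin N → ℝ) (hp : ∀ n, 0 ≤ p n) (hr : ∀ n, 0 < r n) :
    KL p r = ∑ n, p n * Real.log (p n) - ∑ n, p n * Real.log (r n) := by
  rw [KL, ← Finset.sum_sub_distrib]
  refine Finset.sum_congr rfl fun n _ => ?_
  rcases (hp n).eq_or_lt with h | h
  · simp [← h]
  · rw [Real.log_div h.ne' (hr n).ne']; ring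

lemma log_mid {a b : ℝ} (ha : 0 < a) (hb : 0 < b) :
    (Real.log a + Real.log b) / 2 ≤ Real.log ((a + b) / 2) := by
  have h := strictConcaveOn_log_Ioi.concaveOn.2 (Set.mem_Ioi.2 ha) (Set.mem_Ioi.2 hb)
    (by norm_num : (0:ℝ) ≤ 1/2) (by norm_num : (0:ℝ) ≤ 1/2) (by norm_num)
  simp only [smul_eq_mul] at h
  have heq : (a + b) / 2 = 1/2 * a + 1/2 * b := by ring
  rw [heq]; linarith

/-- Theorem 2 / optimality condition for `K` codebooks: a global
minimizer of the `K`-codebook cost has each used codebook equal to the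
conditional centroid of its cluster. -/
theorem stmt_8 (N J K : ℕ) (hN : 1 ≤ N) (hJ : 1 ≤ J) (hK : 1 ≤ K)
    (p : Fin J → Fin N → ℝ) (hp : ∀ j, p j ∈ simplex N)
    (f : Fin J → ℝ) (hf : ∀ j, 0 ≤ f j) (hfsum : ∑ j, f j = 1)
    (q : Fin K → Fin N → ℝ)
    (hqdom : ∀ k, q k ∈ simplex N ∧ ∀ n, 0 < q k n)
    (hmin : ∀ q' : Fin K → Fin N → ℝ,
      (∀ k, q' k ∈ simplex N ∧ ∀ n, 0 < q' k n) →
      ∑ j, f j * ⨅ k, KL (p j) (q k) ≤ ∑ j, f j * ⨅ k, KL (p j) (q' k))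
    (a : Fin J → Fin K)
    (ha : ∀ j, KL (p j) (q (a j)) = ⨅ k, KL (p j) (q k))
    (k : Fin K)
    (hw : 0 < ∑ j ∈ Finset.univ.filter (fun j => a j = k), f j) :
    ∀ n, q k n =
      (∑ j ∈ Finset.univ.filter (fun j => a j = k), f j * p j n) /
        (∑ j ∈ Finset.univ.filter (fun j => a j = k), f j) := by
  classical
  by_contra hcon
  push_neg at hcon
  obtain ⟨n₀, hn₀⟩ := hcon
  set S := Finset.univ.filter (fun j => a j = k) with hSdef
  set w := ∑ j ∈ S, f j with hwdef
  have hwpos : 0 < w := hw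
  set c : Fin N → ℝ := fun n => (∑ j ∈ S, f j * p j n) / w with hcdef
  have hc0 : ∀ n, 0 ≤ c n := fun n =>
    div_nonneg (Finset.sum_nonneg fun j _ => mul_nonneg (hf j) ((hp j).1 n)) hwpos.le
  have hwc : ∀ n, w * c n = ∑ j ∈ S, f j * p j n := fun n => by
    rw [hcdef]; field_simp
  have hcs : ∑ n, c n = 1 := by
    have h2 : ∀ j ∈ S, ∑ n, f j * p j n = f j := fun j _ => by
      rw [← Finset.mul_sum, (hp j).2, mul_one]
    have h1 : ∑ n, c n = (∑ j ∈ S, f j) / w := by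
      rw [hcdef, ← Finset.sum_div, Finset.sum_comm, Finset.sum_congr rfl h2]
    rw [h1, ← hwdef]
    exact div_self hwpos.ne'
  have hcne : c n₀ ≠ q k n₀ := by
    rw [hcdef]; exact fun h => hn₀ h.symm
  -- the midpoint codebook
  set r : Fin N → ℝ := fun n => (q k n + c n) / 2 with hrdef
  have hr0 : ∀ n, 0 < r n := fun n =>
    div_pos (add_pos_of_pos_of_nonneg ((hqdom k).2 n) (hc0 n)) two_pos
  have hrs : ∑ n, r n = 1 := by
    rw [hrdef]
    simp only
    rw [← Finset.sum_div, Finset.sum_add_distrib, (hqdom k).1.2, hcs]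
    norm_num
  set q' := Function.update q k r with hq'def
  have hq'dom : ∀ k', q' k' ∈ simplex N ∧ ∀ n, 0 < q' k' n := by
    intro k'
    by_cases h : k' = k
    · subst h
      rw [hq'def]
      rw [Function.update_self]
      exact ⟨⟨fun n => (hr0 n).le, hrs⟩, hr0⟩
    · rw [hq'def, Function.update_of_ne h]
      exact hqdom k'
  have key := hmin q' hq'dom
  -- rewrite F(q)
  have hFq : ∑ j, f j * ⨅ k', KL (p j) (q k') = ∑ j, f j * KL (p j) (q (a j)) :=
    Finset.sum_congr rfl fun j _ => by rw [ha j]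
  have hB : ∑ j, f j * ⨅ k', KL (p j) (q' k') ≤ ∑ j, f j * KL (p j) (q' (a j)) :=
    Finset.sum_le_sum fun j _ =>
      mul_le_mul_of_nonneg_left (ciInf_le (Set.finite_range _).bddBelow (a j)) (hf j)
  have hsplit : ∀ x : Fin K → Fin N → ℝ,
      ∑ j, f j * KL (p j) (x (a j)) =
        (∑ j ∈ S, f j * KL (p j) (x k)) +
          ∑ j ∈ Finset.univ.filter (fun j => ¬ a j = k), f j * KL (p j) (x (a j)) := by
    intro x
    rw [← Finset.sum_filter_add_sum_filter_not Finset.univ (fun j => a j = k)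
      (fun j => f j * KL (p j) (x (a j)))]
    congr 1
    refine Finset.sum_congr rfl fun j hj => ?_
    have haj : a j = k := by
      have := Finset.mem_filter.1 hj
      exact this.2
    rw [haj]
  -- KL decomposition over the cluster
  have hdecomp : ∀ x : Fin N → ℝ, (∀ n, 0 < x n) →
      ∑ j ∈ S, f j * KL (p j) x =
        (∑ j ∈ S, f j * ∑ n, p j n * Real.log (p j n)) - w * ∑ n, c n * Real.log (x n) := by
    intro x hx
    have h1 : ∀ j ∈ S, f j * KL (p j) x =
        f j * ∑ n, p j n * Real.log (p j n) - f j * ∑ n, p j n * Real.log (x n) :=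
      fun j _ => by rw [KL_eq (p j) x ((hp j).1) hx]; ring
    rw [Finset.sum_congr rfl h1, Finset.sum_sub_distrib]
    congr 1
    calc ∑ j ∈ S, f j * ∑ n, p j n * Real.log (x n)
        = ∑ j ∈ S, ∑ n, f j * (p j n * Real.log (x n)) := by
          refine Finset.sum_congr rfl fun j _ => ?_; rw [Finset.mul_sum]
      _ = ∑ n, ∑ j ∈ S, f j * (p j n * Real.log (x n)) := Finset.sum_comm
      _ = ∑ n, (∑ j ∈ S, f j * p j n) * Real.log (x n) := by
          refine Finset.sum_congr rfl fun n _ => ?_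
          rw [Finset.sum_mul]
          exact Finset.sum_congr rfl fun j _ => by ring
      _ = ∑ n, w * c n * Real.log (x n) := by
          refine Finset.sum_congr rfl fun n _ => ?_
          rw [hwc n]
      _ = w * ∑ n, c n * Real.log (x n) := by
          rw [Finset.mul_sum]
          exact Finset.sum_congr rfl fun n _ => by ring
  -- Gibbs inequality
  have hg : ∑ n, c n * Real.log (q k n) < ∑ n, c n * Real.log (c n) :=
    gibbs c (q k) hc0 hcs ((hqdom k).2) ((hqdom k).1.2) n₀ hcne
  -- midpoint concavity
  have hmid : ∀ n, c n * ((Real.log (q k n) + Real.log (c n)) / 2) ≤ c n * Real.log (r n) := by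
    intro n
    rcases (hc0 n).eq_or_lt with h | h
    · rw [← h]; simp
    · have hlm := log_mid ((hqdom k).2 n) h
      have hrn : r n = (q k n + c n) / 2 := by rw [hrdef]
      rw [hrn]
      exact mul_le_mul_of_nonneg_left hlm (hc0 n)
  have hmids : ∑ n, c n * ((Real.log (q k n) + Real.log (c n)) / 2) =
      ((∑ n, c n * Real.log (q k n)) + ∑ n, c n * Real.log (c n)) / 2 := by
    rw [← Finset.sum_add_distrib, Finset.sum_div]
    exact Finset.sum_congr rfl fun n _ => by ring
  have hkey : ∑ n, c n * Real.log (q k n) < ∑ n, c n * Real.log (r n) := by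
    have hsum := Finset.sum_le_sum (fun n (_ : n ∈ Finset.univ) => hmid n)
    rw [hmids] at hsum
    linarith
  have hD : ∑ j ∈ S, f j * KL (p j) r < ∑ j ∈ S, f j * KL (p j) (q k) := by
    rw [hdecomp r hr0, hdecomp (q k) ((hqdom k).2)]
    have := mul_lt_mul_of_pos_left hkey hwpos
    linarith
  -- assemble the contradiction
  have hq'k : q' k = r := by rw [hq'def, Function.update_self]
  have hq'rest : ∀ j ∈ Finset.univ.filter (fun j => ¬ a j = k), q' (a j) = q (a j) := by
    intro j hj
    have : ¬ a j = k := (Finset.mem_filter.1 hj).2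
    rw [hq'def, Function.update_of_ne this]
  have hFq' : ∑ j, f j * KL (p j) (q' (a j)) =
      (∑ j ∈ S, f j * KL (p j) r) +
        ∑ j ∈ Finset.univ.filter (fun j => ¬ a j = k), f j * KL (p j) (q (a j)) := by
    rw [hsplit q', hq'k]
    congr 1
    exact Finset.sum_congr rfl fun j hj => by rw [hq'rest j hj]
  have hFqq : ∑ j, f j * KL (p j) (q (a j)) =
      (∑ j ∈ S, f j * KL (p j) (q k)) +
        ∑ j ∈ Finset.univ.filter (fun j => ¬ a j = k), f j * KL (p j) (q (a j)) :=
    hsplit q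
  rw [hFq, hFqq] at key
  rw [hFq'] at hB
  linarith
end

section
/- (Optimal codebooks for a fixed probabilistic clustering, Eq. (15).) Let p_1,…,p_J ∈ Δ_N, let f_1,…,f_J ≥ 0 with ∑_j f_j = 1, and let r ∈ ℝ^{J×K} be row-stochastic. For each k define s_{k,n} = ∑_{j=1}^J f_j p_{j,n} r_{j,k} and t_k = ∑_{n=1}^N s_{k,n}, and assume t_k > 0 for every k; set q_k(r) ∈ Δ_N by q_k(r)_n = s_{k,n}/t_k. Then for every K-tuple (q'_1,…,q'_K) of elements of Δ_N with each q'_k strictly positive in every coordinate n for which s_{k,n} > 0, one has ∑_{j=1}^J ∑_{k=1}^K f_j r_{j,k} D(p_j‖q'_k) ≥ ∑_{j=1}^J ∑_{k=1}^K f_j r_{j,k} D(p_j‖q_k(r)). -/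
open Finset

/-- optimal codebooks for a fixed probabilistic clustering,
Eq. (15). -/
theorem stmt_10 (N J K : ℕ)
    (p : Fin J → Fin N → ℝ) (hp : ∀ j, p j ∈ simplex N)
    (f : Fin J → ℝ) (hf : ∀ j, 0 ≤ f j) (hfsum : ∑ j, f j = 1)
    (r : Fin J → Fin K → ℝ)
    (hr0 : ∀ j k, 0 ≤ r j k) (hr1 : ∀ j, ∑ k, r j k = 1)
    (s : Fin K → Fin N → ℝ) (hs : ∀ k n, s k n = ∑ j, f j * p j n * r j k)
    (t : Fin K → ℝ) (ht : ∀ k, t k = ∑ n, s k n) (htpos : ∀ k, 0 < t k)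
    (qr : Fin K → Fin N → ℝ) (hqr : ∀ k n, qr k n = s k n / t k)
    (q' : Fin K → Fin N → ℝ)
    (hq' : ∀ k, q' k ∈ simplex N ∧ ∀ n, 0 < s k n → 0 < q' k n) :
    ∑ j, ∑ k, f j * r j k * KL (p j) (qr k) ≤
      ∑ j, ∑ k, f j * r j k * KL (p j) (q' k) := by
  have hsnn : ∀ k n, 0 ≤ s k n := by
    intro k n; rw [hs]
    exact Finset.sum_nonneg fun j _ =>
      mul_nonneg (mul_nonneg (hf j) ((hp j).1 n)) (hr0 j k)
  rw [← sub_nonneg]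
  have expand : ∀ (q : Fin K → Fin N → ℝ),
      ∑ j, ∑ k, f j * r j k * KL (p j) (q k)
        = ∑ k, ∑ n, ∑ j, f j * p j n * r j k * Real.log (p j n / q k n) := by
    intro q
    rw [Finset.sum_comm]
    refine Finset.sum_congr rfl fun k _ => ?_
    simp only [KL, Finset.mul_sum]
    rw [Finset.sum_comm]
    exact Finset.sum_congr rfl fun n _ => Finset.sum_congr rfl fun j _ => by ring
  have hdiff : ∑ j, ∑ k, f j * r j k * KL (p j) (q' k) -
      ∑ j, ∑ k, f j * r j k * KL (p j) (qr k)
      = ∑ k, ∑ n, s k n * Real.log (qr k n / q' k n) := by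
    rw [expand q', expand qr, ← Finset.sum_sub_distrib]
    refine Finset.sum_congr rfl fun k _ => ?_
    rw [← Finset.sum_sub_distrib]
    refine Finset.sum_congr rfl fun n _ => ?_
    rw [← Finset.sum_sub_distrib, hs, Finset.sum_mul]
    refine Finset.sum_congr rfl fun j _ => ?_
    by_cases h : f j * p j n * r j k = 0
    · rw [h]; ring
    · have hnn : 0 ≤ f j * p j n * r j k :=
        mul_nonneg (mul_nonneg (hf j) ((hp j).1 n)) (hr0 j k)
      have hpos : 0 < f j * p j n * r j k := lt_of_le_of_ne hnn (Ne.symm h)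
      have hppos : 0 < p j n := by
        rcases (hp j).1 n |>.lt_or_eq with h' | h'
        · exact h'
        · exact absurd (by rw [← h']; ring) h
      have hspos : 0 < s k n := by
        refine lt_of_lt_of_le hpos ?_
        rw [hs]
        exact Finset.single_le_sum
          (fun j' _ => mul_nonneg (mul_nonneg (hf j') ((hp j').1 n)) (hr0 j' k))
          (Finset.mem_univ j)
      have hqrpos : 0 < qr k n := by rw [hqr]; exact div_pos hspos (htpos k)
      have hq'pos : 0 < q' k n := (hq' k).2 n hspos
      rw [← mul_sub, Real.log_div hppos.ne' hq'pos.ne',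
        Real.log_div hppos.ne' hqrpos.ne', Real.log_div hqrpos.ne' hq'pos.ne']
      ring
  rw [hdiff]
  refine Finset.sum_nonneg fun k _ => ?_
  have h1 : ∀ n, (if 0 < s k n then s k n - t k * q' k n else 0)
      ≤ s k n * Real.log (qr k n / q' k n) := by
    intro n
    by_cases h : 0 < s k n
    · rw [if_pos h]
      have hqrpos : 0 < qr k n := by rw [hqr]; exact div_pos h (htpos k)
      have hq'pos : 0 < q' k n := (hq' k).2 n h
      have hlog : Real.log (q' k n / qr k n) ≤ q' k n / qr k n - 1 :=
        Real.log_le_sub_one_of_pos (div_pos hq'pos hqrpos)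
      have hlog2 : 1 - q' k n / qr k n ≤ Real.log (qr k n / q' k n) := by
        rw [Real.log_div hqrpos.ne' hq'pos.ne']
        rw [Real.log_div hq'pos.ne' hqrpos.ne'] at hlog
        linarith
      have key : s k n - t k * q' k n = s k n * (1 - q' k n / qr k n) := by
        rw [hqr]
        field_simp
      rw [key]
      exact mul_le_mul_of_nonneg_left hlog2 h.le
    · have hs0 : s k n = 0 := le_antisymm (not_lt.1 h) (hsnn k n)
      rw [if_neg h, hs0, zero_mul]
  have h2 : (0:ℝ) ≤ ∑ n, (if 0 < s k n then s k n - t k * q' k n else 0) := by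
    rw [← Finset.sum_filter]
    set F := Finset.univ.filter fun n => 0 < s k n with hF
    have hF_s : ∑ n ∈ F, s k n = t k := by
      rw [ht]
      refine Finset.sum_subset (Finset.filter_subset _ _) fun n _ hn => ?_
      simp only [hF, Finset.mem_filter, Finset.mem_univ, true_and, not_lt] at hn
      exact le_antisymm hn (hsnn k n)
    have hF_q : ∑ n ∈ F, q' k n ≤ 1 := by
      rw [← (hq' k).1.2]
      exact Finset.sum_le_sum_of_subset_of_nonneg (Finset.filter_subset _ _)
        fun n _ _ => (hq' k).1.1 n
    rw [Finset.sum_sub_distrib, hF_s, ← Finset.mul_sum]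
    nlinarith [htpos k]
  exact le_trans h2 (Finset.sum_le_sum fun n _ => h1 n)
end

section
/- (Reduction of the relaxed objective, core identity of Lemma 1 and Theorem 3.) Let p_1,…,p_J ∈ Δ_N, let f_1,…,f_J ≥ 0 with ∑_j f_j = 1, and let r ∈ ℝ^{J×K} be row-stochastic. Define s_{k,n} = ∑_{j=1}^J f_j p_{j,n} r_{j,k} and t_k = ∑_{n=1}^N s_{k,n}, assume t_k > 0 for all k, and set q_k(r)_n = s_{k,n}/t_k. Then ∑_{j=1}^J ∑_{k=1}^K f_j r_{j,k} D(p_j‖q_k(r)) = ∑_{k=1}^K ∑_{n : s_{k,n}>0} s_{k,n} log(t_k / s_{k,n}) + ∑_{j=1}^J f_j ∑_{n : p_{j,n}>0} p_{j,n} log p_{j,n}. -/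
open Finset

/-- reduction of the relaxed objective, core identity of
Lemma 1 and Theorem 3. Sums over `{n : s_{k,n} > 0}` and `{n : p_{j,n} > 0}`
coincide with full sums since the summands vanish when the leading factor
is `0` (convention `0 · log 0 = 0`). -/
theorem stmt_11 (N J K : ℕ)
    (p : Fin J → Fin N → ℝ) (hp : ∀ j, p j ∈ simplex N)
    (f : Fin J → ℝ) (hf : ∀ j, 0 ≤ f j) (hfsum : ∑ j, f j = 1)
    (r : Fin J → Fin K → ℝ)
    (hr0 : ∀ j k, 0 ≤ r j k) (hr1 : ∀ j, ∑ k, r j k = 1)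
    (s : Fin K → Fin N → ℝ) (hs : ∀ k n, s k n = ∑ j, f j * p j n * r j k)
    (t : Fin K → ℝ) (ht : ∀ k, t k = ∑ n, s k n) (htpos : ∀ k, 0 < t k)
    (qr : Fin K → Fin N → ℝ) (hqr : ∀ k n, qr k n = s k n / t k) :
    ∑ j, ∑ k, f j * r j k * KL (p j) (qr k) =
      (∑ k, ∑ n, s k n * Real.log (t k / s k n)) +
        ∑ j, f j * ∑ n, p j n * Real.log (p j n) := by
  have key : ∀ j k n, f j * r j k * (p j n * Real.log (p j n / qr k n)) =
      f j * r j k * (p j n * Real.log (p j n)) +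
      (f j * p j n * r j k) * Real.log (t k / s k n) := by
    intro j k n
    rcases eq_or_lt_of_le (mul_nonneg (mul_nonneg (hf j) ((hp j).1 n)) (hr0 j k)) with h | h
    · rcases mul_eq_zero.1 h.symm with h1 | h1
      · rcases mul_eq_zero.1 h1 with h2 | h2
        · simp [h2]
        · simp [h2]
      · simp [h1]
    · have hspos : 0 < s k n := by
        rw [hs]
        calc 0 < f j * p j n * r j k := h
          _ ≤ _ := Finset.single_le_sum
            (fun j' _ => mul_nonneg (mul_nonneg (hf j') ((hp j').1 n)) (hr0 j' k))
            (Finset.mem_univ j)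
      have hppos : 0 < p j n := by
        rcases ((hp j).1 n).lt_or_eq with h' | h'
        · exact h'
        · exfalso; rw [← h'] at h; simp at h
      have htk := htpos k
      rw [hqr, div_div_eq_mul_div, Real.log_div (by positivity) hspos.ne',
          Real.log_mul hppos.ne' htk.ne', Real.log_div htk.ne' hspos.ne']
      ring
  have step : ∑ j, ∑ k, f j * r j k * KL (p j) (qr k) =
      ∑ j, ∑ k, ∑ n, (f j * r j k * (p j n * Real.log (p j n)) +
        (f j * p j n * r j k) * Real.log (t k / s k n)) := by
    refine Finset.sum_congr rfl fun j _ => Finset.sum_congr rfl fun k _ => ?_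
    rw [KL, Finset.mul_sum]
    exact Finset.sum_congr rfl fun n _ => key j k n
  rw [step]
  simp only [Finset.sum_add_distrib]
  have h1 : ∀ j, ∑ k, ∑ n, f j * r j k * (p j n * Real.log (p j n)) =
      f j * ∑ n, p j n * Real.log (p j n) := by
    intro j
    simp only [mul_assoc, ← Finset.mul_sum]
    rw [← Finset.sum_mul, hr1, one_mul]
  have h2 : ∑ j, ∑ k, ∑ n, (f j * p j n * r j k) * Real.log (t k / s k n) =
      ∑ k, ∑ n, s k n * Real.log (t k / s k n) := by
    rw [Finset.sum_comm]
    refine Finset.sum_congr rfl fun k _ => ?_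
    rw [Finset.sum_comm]
    refine Finset.sum_congr rfl fun n _ => ?_
    rw [hs, Finset.sum_mul]
  rw [h2, add_comm]
  congr 1
  exact Finset.sum_congr rfl fun j _ => h1 j
end

section
/- (Existence of a deterministic optimizer, Appendix claim.) Let p_1,…,p_J ∈ Δ_N and f_1,…,f_J ≥ 0 with ∑_j f_j = 1. For row-stochastic r ∈ ℝ^{J×K} define s_{k,n}(r) = ∑_{j=1}^J f_j p_{j,n} r_{j,k}, t_k(r) = ∑_{n=1}^N s_{k,n}(r), and G(r) = ∑_{k,n : s_{k,n}(r)>0} s_{k,n}(r) log(t_k(r)/s_{k,n}(r)) (with the convention 0·log 0 = 0). Then there exists a row-stochastic matrix r* with every entry in {0,1} such that G(r*) ≤ G(r) for all row-stochastic r; that is, the relaxed clustering problem attains its minimum at a deterministic clustering. -/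
open Finset

/-!
Each summand `s log (t / s)` of `G` is the function `(a, b) ↦ a log (b / a)`, concave on
`0 ≤ a ≤ b` by the log-sum inequality, applied to a linear function of `r`; hence `G` is concave
on nonnegative matrices. Row-stochastic matrices form a product of simplices, i.e. the convex hull
of the 0-1 row-stochastic matrices, so by the minimum principle for concave functions every value
`G r` dominates the value at some deterministic matrix. Among the finitely many of those, take
the best one.
-/

open Real

lemma mul_log_div_le_of_le {u v c : ℝ} (hu : 0 ≤ u) (huv : u ≤ v) (hc : 0 < c) :
    u * log (v / u) ≤ u * log c + v / c - u := by
  rcases hu.eq_or_lt with rfl | hu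
  · simpa using div_nonneg huv hc.le
  have hv : 0 < v := hu.trans_le huv
  have key : log (v / u / c) ≤ v / u / c - 1 := log_le_sub_one_of_pos (by positivity)
  rw [log_div (by positivity) hc.ne'] at key
  have := mul_le_mul_of_nonneg_left key hu.le
  field_simp at this ⊢
  linarith

theorem sum_mul_log_div_le {ι : Type*} (s : Finset ι) {a b : ι → ℝ}
    (ha : ∀ i ∈ s, 0 ≤ a i) (hab : ∀ i ∈ s, a i ≤ b i) :
    ∑ i ∈ s, a i * log (b i / a i) ≤
      (∑ i ∈ s, a i) * log ((∑ i ∈ s, b i) / ∑ i ∈ s, a i) := by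
  set A := ∑ i ∈ s, a i
  set B := ∑ i ∈ s, b i
  have hA0 : 0 ≤ A := sum_nonneg ha
  rcases hA0.eq_or_lt with hA | hA
  · have ha0 := (sum_eq_zero_iff_of_nonneg ha).mp hA.symm
    rw [← hA, zero_mul, sum_eq_zero fun i hi => by rw [ha0 i hi, zero_mul]]
  have hB : 0 < B := hA.trans_le (sum_le_sum hab)
  -- with `c = B / A` the correction terms `b i / c - a i` sum to zero
  calc ∑ i ∈ s, a i * log (b i / a i)
      ≤ ∑ i ∈ s, (a i * log (B / A) + b i / (B / A) - a i) :=
        sum_le_sum fun i hi => mul_log_div_le_of_le (ha i hi) (hab i hi) (by positivity)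
    _ = A * log (B / A) := by
        rw [sum_sub_distrib, sum_add_distrib, ← sum_mul, ← sum_div]
        field_simp
        ring

lemma mul_mul_log_div (c u v : ℝ) : c * (u * log (v / u)) = c * u * log (c * v / (c * u)) := by
  rcases eq_or_ne c 0 with rfl | hc
  · simp
  · rw [mul_div_mul_left _ _ hc, mul_assoc]

theorem concaveOn_mul_log_div :
    ConcaveOn ℝ {x : ℝ × ℝ | 0 ≤ x.1 ∧ x.1 ≤ x.2} fun x => x.1 * log (x.2 / x.1) := by
  refine ⟨?_, ?_⟩
  · rintro x ⟨hx0, hx⟩ y ⟨hy0, hy⟩ a b ha hb -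
    simp only [Set.mem_ofPred_eq, Prod.fst_add, Prod.snd_add, Prod.smul_fst, Prod.smul_snd,
      smul_eq_mul]
    constructor
    · positivity
    · gcongr
  rintro x ⟨hx0, hx⟩ y ⟨hy0, hy⟩ a b ha hb -
  have := sum_mul_log_div_le univ (a := ![a * x.1, b * y.1]) (b := ![a * x.2, b * y.2])
    (fun i _ => by fin_cases i; exacts [mul_nonneg ha hx0, mul_nonneg hb hy0])
    (fun i _ => by fin_cases i; exacts [mul_le_mul_of_nonneg_left hx ha,
      mul_le_mul_of_nonneg_left hy hb])
  simpa [Fin.sum_univ_two, mul_mul_log_div] using this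

theorem ConcaveOn.finset_sum {𝕜 E β ι : Type*} [Semiring 𝕜] [PartialOrder 𝕜]
    [AddCommMonoid E] [AddCommMonoid β] [PartialOrder β] [IsOrderedAddMonoid β] [SMul 𝕜 E]
    [Module 𝕜 β] {s : Set E} (hs : Convex 𝕜 s) (t : Finset ι) {f : ι → E → β}
    (hf : ∀ i ∈ t, ConcaveOn 𝕜 s (f i)) :
    ConcaveOn 𝕜 s fun x => ∑ i ∈ t, f i x := by
  induction t using Finset.cons_induction with
  | empty => simpa using concaveOn_const (0 : β) hs
  | cons i t hi ih =>
    simp only [sum_cons]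
    exact (hf i (mem_cons_self i t)).add (ih fun j hj => hf j (mem_cons_of_mem hj))

theorem mem_convexHull_deterministic {ι κ : Type*} [Finite ι] [Fintype κ] [DecidableEq κ]
    {r : ι → κ → ℝ} (hr : ∀ j, r j ∈ stdSimplex ℝ κ) :
    r ∈ convexHull ℝ (Set.univ.pi fun _ => Set.range fun k k' => if k = k' then 1 else 0) := by
  simpa [convexHull_basis_eq_stdSimplex] using hr

theorem ConcaveOn.exists_deterministic_le {ι κ : Type*} [Finite ι] [Fintype κ] [DecidableEq κ]
    {F : (ι → κ → ℝ) → ℝ} (hF : ConcaveOn ℝ (Set.Ici 0) F) {r : ι → κ → ℝ}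
    (hr : ∀ j, r j ∈ stdSimplex ℝ κ) :
    ∃ σ : ι → κ, F (fun j k => if σ j = k then 1 else 0) ≤ F r := by
  have hdet : (Set.univ.pi fun (_ : ι) =>
      Set.range fun (k k' : κ) => if k = k' then (1 : ℝ) else 0) ⊆ Set.Ici 0 := by
    rintro D hD j k
    obtain ⟨k', hk'⟩ := hD j (Set.mem_univ j)
    rw [← hk']
    positivity
  obtain ⟨D, hD, hDr⟩ := hF.exists_le_of_mem_convexHull hdet (mem_convexHull_deterministic hr)
  choose σ hσ using fun j => hD j (Set.mem_univ j)
  obtain rfl : (fun j k => if σ j = k then 1 else 0) = D := funext hσ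
  exact ⟨σ, hDr⟩

section Clustering

variable {ι κ ν : Type*} [Fintype ι] [Fintype ν] (w : ι → ν → ℝ)

def clusterMass (k : κ) (n : ν) : (ι → κ → ℝ) →ₗ[ℝ] ℝ × ℝ where
  toFun r := (∑ j, w j n * r j k, ∑ n', ∑ j, w j n' * r j k)
  map_add' r r' := by simp [mul_add, sum_add_distrib]
  map_smul' c r := by simp [mul_sum, mul_left_comm]

noncomputable def clusterObjective [Fintype κ] (r : ι → κ → ℝ) : ℝ :=
  ∑ k, ∑ n, (∑ j, w j n * r j k) *
    log ((∑ n', ∑ j, w j n' * r j k) / ∑ j, w j n * r j k)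

theorem concaveOn_clusterObjective [Fintype κ] (hw : ∀ j n, 0 ≤ w j n) :
    ConcaveOn ℝ (Set.Ici (0 : ι → κ → ℝ)) (clusterObjective w) := by
  refine .finset_sum (convex_Ici 0) _ fun k _ => .finset_sum (convex_Ici 0) _ fun n _ => ?_
  refine (concaveOn_mul_log_div.comp_linearMap (clusterMass w k n)).subset ?_ (convex_Ici 0)
  intro r (hr : ∀ j k, 0 ≤ r j k)
  exact ⟨sum_nonneg fun j _ => mul_nonneg (hw j n) (hr j k),
    single_le_sum (f := fun n' => ∑ j, w j n' * r j k)
      (fun n' _ => sum_nonneg fun j _ => mul_nonneg (hw j n') (hr j k)) (mem_univ n)⟩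

end Clustering

theorem stmt_13_general (N J K : ℕ) (hK : 1 ≤ K)
    (p : Fin J → Fin N → ℝ) (hp : ∀ j, p j ∈ simplex N)
    (f : Fin J → ℝ) (hf : ∀ j, 0 ≤ f j) :
    ∃ rstar : Fin J → Fin K → ℝ,
      (∀ j k, 0 ≤ rstar j k) ∧ (∀ j, ∑ k, rstar j k = 1) ∧
      (∀ j k, rstar j k = 0 ∨ rstar j k = 1) ∧
      ∀ r : Fin J → Fin K → ℝ,
        (∀ j k, 0 ≤ r j k) → (∀ j, ∑ k, r j k = 1) →
        (∑ k, ∑ n, (∑ j, f j * p j n * rstar j k) *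
            Real.log ((∑ n', ∑ j, f j * p j n' * rstar j k) /
              (∑ j, f j * p j n * rstar j k))) ≤
          ∑ k, ∑ n, (∑ j, f j * p j n * r j k) *
            Real.log ((∑ n', ∑ j, f j * p j n' * r j k) /
              (∑ j, f j * p j n * r j k)) := by
  have : Nonempty (Fin K) := ⟨⟨0, hK⟩⟩
  set G : (Fin J → Fin K → ℝ) → ℝ := clusterObjective fun j n => f j * p j n
  have hG : ConcaveOn ℝ (Set.Ici 0) G :=
    concaveOn_clusterObjective _ fun j n => mul_nonneg (hf j) ((hp j).1 n)
  obtain ⟨σ, -, hσ⟩ := exists_min_image univ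
    (fun σ : Fin J → Fin K => G fun j k => if σ j = k then 1 else 0) univ_nonempty
  refine ⟨fun j k => if σ j = k then 1 else 0, fun j k => by positivity, fun j => by simp,
    fun j k => (ite_eq_or_eq _ _ _).symm, fun r hr0 hr1 => ?_⟩
  obtain ⟨τ, hτ⟩ := hG.exists_deterministic_le (r := r) fun j => ⟨hr0 j, hr1 j⟩
  exact (hσ τ (mem_univ τ)).trans hτ

/-- existence of a deterministic optimizer, Appendix claim:
the relaxed clustering objective `G` attains its minimum over row-stochastic
matrices at a 0-1 (deterministic) matrix. -/
theorem stmt_13 (N J K : ℕ) (hK : 1 ≤ K)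
    (p : Fin J → Fin N → ℝ) (hp : ∀ j, p j ∈ simplex N)
    (f : Fin J → ℝ) (hf : ∀ j, 0 ≤ f j) (hfsum : ∑ j, f j = 1) :
    ∃ rstar : Fin J → Fin K → ℝ,
      (∀ j k, 0 ≤ rstar j k) ∧ (∀ j, ∑ k, rstar j k = 1) ∧
      (∀ j k, rstar j k = 0 ∨ rstar j k = 1) ∧
      ∀ r : Fin J → Fin K → ℝ,
        (∀ j k, 0 ≤ r j k) → (∀ j, ∑ k, r j k = 1) →
        (∑ k, ∑ n, (∑ j, f j * p j n * rstar j k) *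
            Real.log ((∑ n', ∑ j, f j * p j n' * rstar j k) /
              (∑ j, f j * p j n * rstar j k))) ≤
          ∑ k, ∑ n, (∑ j, f j * p j n * r j k) *
            Real.log ((∑ n', ∑ j, f j * p j n' * r j k) /
              (∑ j, f j * p j n * r j k)) :=
  stmt_13_general N J K hK p hp f hf
end

section
/- (Monotone descent of the k-means-type iteration, convergence claim for Algorithms 3 and 4.) Let p_1,…,p_J ∈ Δ_N each have all entries strictly positive, let f_1,…,f_J ≥ 0 with ∑_j f_j = 1, let q_1,…,q_K ∈ Δ_N each have all entries strictly positive, and let a : {1,…,J} → {1,…,K} be any assignment. For each k, define the updated codebook c_k by c_{k,n} = (∑_{j : a(j)=k} f_j p_{j,n}) / (∑_{j : a(j)=k} f_j) if ∑_{j : a(j)=k} f_j > 0, and c_k = q_k otherwise; and let a' : {1,…,J} → {1,…,K} be any assignment with D(p_j‖c_{a'(j)}) = min_k D(p_j‖c_k) for all j. Then ∑_{j=1}^J f_j D(p_j‖c_{a'(j)}) ≤ ∑_{j=1}^J f_j D(p_j‖q_{a(j)}); that is, one full iteration (centroid update followed by reassignment) does not increase the clustering objective. -/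
open Finset

/-- Gibbs' inequality: `0 ≤ D(c‖q)` for positive vectors with equal sums. -/
lemma gibbs_s14 {N : ℕ} (c q : Fin N → ℝ) (hcpos : ∀ n, 0 < c n) (hqpos : ∀ n, 0 < q n)
    (hsum : ∑ n, c n = ∑ n, q n) : 0 ≤ ∑ n, c n * Real.log (c n / q n) := by
  have h : ∑ n, c n * Real.log (q n / c n) ≤ 0 := by
    calc ∑ n, c n * Real.log (q n / c n)
        ≤ ∑ n, c n * (q n / c n - 1) := by
          apply Finset.sum_le_sum
          intro n _
          exact mul_le_mul_of_nonneg_left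
            (Real.log_le_sub_one_of_pos (div_pos (hqpos n) (hcpos n))) (hcpos n).le
      _ = ∑ n, (q n - c n) := by
          apply Finset.sum_congr rfl
          intro n _
          rw [mul_sub, mul_div_cancel₀ _ (hcpos n).ne', mul_one]
      _ = 0 := by rw [Finset.sum_sub_distrib, hsum]; ring
  have heq : ∑ n, c n * Real.log (c n / q n) = -∑ n, c n * Real.log (q n / c n) := by
    rw [← Finset.sum_neg_distrib]
    apply Finset.sum_congr rfl
    intro n _
    rw [Real.log_div (hcpos n).ne' (hqpos n).ne', Real.log_div (hqpos n).ne' (hcpos n).ne']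
    ring
  rw [heq]
  linarith

/-- monotone descent of the `k`-means-type iteration:
one full iteration (centroid update followed by reassignment) does not
increase the clustering objective. -/
theorem stmt_14 (N J K : ℕ)
    (p : Fin J → Fin N → ℝ) (hp : ∀ j, p j ∈ simplex N ∧ ∀ n, 0 < p j n)
    (f : Fin J → ℝ) (hf : ∀ j, 0 ≤ f j) (hfsum : ∑ j, f j = 1)
    (q : Fin K → Fin N → ℝ) (hq : ∀ k, q k ∈ simplex N ∧ ∀ n, 0 < q k n)
    (a : Fin J → Fin K)
    (c : Fin K → Fin N → ℝ)
    (hc : ∀ k n, c k n =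
      if 0 < ∑ j ∈ Finset.univ.filter (fun j => a j = k), f j then
        (∑ j ∈ Finset.univ.filter (fun j => a j = k), f j * p j n) /
          (∑ j ∈ Finset.univ.filter (fun j => a j = k), f j)
      else q k n)
    (a' : Fin J → Fin K)
    (ha' : ∀ j k, KL (p j) (c (a' j)) ≤ KL (p j) (c k)) :
    ∑ j, f j * KL (p j) (c (a' j)) ≤ ∑ j, f j * KL (p j) (q (a j)) := by
  -- Step A: reassignment does not increase objective
  have stepA : ∑ j, f j * KL (p j) (c (a' j)) ≤ ∑ j, f j * KL (p j) (c (a j)) :=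
    Finset.sum_le_sum fun j _ => mul_le_mul_of_nonneg_left (ha' j (a j)) (hf j)
  refine stepA.trans ?_
  -- Step B: centroid update does not increase objective
  -- group by cluster
  rw [← Finset.sum_fiberwise (g := a) (f := fun j => f j * KL (p j) (c (a j))),
      ← Finset.sum_fiberwise (g := a) (f := fun j => f j * KL (p j) (q (a j)))]
  apply Finset.sum_le_sum
  intro k _
  set S := Finset.univ.filter (fun j => a j = k) with hS
  have hmem : ∀ j ∈ S, a j = k := fun j hj => (Finset.mem_filter.mp hj).2
  have hL : ∑ j ∈ S, f j * KL (p j) (c (a j)) = ∑ j ∈ S, f j * KL (p j) (c k) :=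
    Finset.sum_congr rfl fun j hj => by rw [hmem j hj]
  have hR : ∑ j ∈ S, f j * KL (p j) (q (a j)) = ∑ j ∈ S, f j * KL (p j) (q k) :=
    Finset.sum_congr rfl fun j hj => by rw [hmem j hj]
  rw [hL, hR]
  by_cases hW : 0 < ∑ j ∈ S, f j
  · -- nontrivial cluster
    set W := ∑ j ∈ S, f j with hWdef
    have hck : ∀ n, c k n = (∑ j ∈ S, f j * p j n) / W := by
      intro n; rw [hc k n, if_pos hW]
    have hckpos : ∀ n, 0 < c k n := by
      intro n
      rw [hck n]
      apply div_pos _ hW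
      obtain ⟨j0, hj0S, hj0⟩ : ∃ j ∈ S, 0 < f j := by
        by_contra hcon
        push_neg at hcon
        have : ∑ j ∈ S, f j = 0 :=
          Finset.sum_eq_zero fun j hj => le_antisymm (hcon j hj) (hf j)
        rw [hWdef, this] at hW; exact lt_irrefl 0 hW
      apply Finset.sum_pos' (fun j hj => mul_nonneg (hf j) ((hp j).2 n).le)
      exact ⟨j0, hj0S, mul_pos hj0 ((hp j0).2 n)⟩
    have hcksum : ∑ n, c k n = 1 := by
      rw [Finset.sum_congr rfl (fun n _ => hck n), ← Finset.sum_div,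
          Finset.sum_comm]
      have : ∑ j ∈ S, ∑ n, f j * p j n = W := by
        rw [hWdef]
        apply Finset.sum_congr rfl
        intro j _
        rw [← Finset.mul_sum, (hp j).1.2, mul_one]
      rw [this, div_self hW.ne']
    -- key computation
    have key : ∑ j ∈ S, f j * KL (p j) (q k) - ∑ j ∈ S, f j * KL (p j) (c k)
        = W * ∑ n, c k n * Real.log (c k n / q k n) := by
      rw [← Finset.sum_sub_distrib]
      have hterm : ∀ j ∈ S, f j * KL (p j) (q k) - f j * KL (p j) (c k)
          = ∑ n, f j * p j n * (Real.log (c k n) - Real.log (q k n)) := by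
        intro j _
        rw [← mul_sub, KL, KL, ← Finset.sum_sub_distrib, Finset.mul_sum]
        apply Finset.sum_congr rfl
        intro n _
        rw [Real.log_div ((hp j).2 n).ne' ((hq k).2 n).ne',
            Real.log_div ((hp j).2 n).ne' (hckpos n).ne']
        ring
      rw [Finset.sum_congr rfl hterm, Finset.sum_comm]
      rw [Finset.mul_sum]
      apply Finset.sum_congr rfl
      intro n _
      rw [← Finset.sum_mul]
      have : ∑ j ∈ S, f j * p j n = W * c k n := by
        rw [hck n, mul_div_cancel₀ _ hW.ne']
      rw [this, Real.log_div (hckpos n).ne' ((hq k).2 n).ne']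
      ring
    have hgibbs : 0 ≤ ∑ n, c k n * Real.log (c k n / q k n) := by
      apply gibbs_s14 _ _ hckpos ((hq k).2)
      rw [hcksum, (hq k).1.2]
    nlinarith [mul_nonneg hW.le hgibbs]
  · -- empty-weight cluster: all f j = 0 on S
    have hzero : ∀ j ∈ S, f j = 0 := by
      intro j hj
      by_contra hne
      have : 0 < ∑ j ∈ S, f j :=
        Finset.sum_pos' (fun i _ => hf i) ⟨j, hj, lt_of_le_of_ne (hf j) (Ne.symm hne)⟩
      exact hW this
    have h1 : ∑ j ∈ S, f j * KL (p j) (c k) = 0 :=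
      Finset.sum_eq_zero fun j hj => by rw [hzero j hj, zero_mul]
    have h2 : ∑ j ∈ S, f j * KL (p j) (q k) = 0 :=
      Finset.sum_eq_zero fun j hj => by rw [hzero j hj, zero_mul]
    rw [h1, h2]
end
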